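/- Let A ∈ ℝ^{m×n} have columns A_1,…,A_n each of unit Euclidean norm, with mutual coherence M = max_{i≠j}|A_iᵀA_j| > 0. Let x₀ ∈ ℝⁿ have exactly N ≥ 1 nonzero entries with N < (M⁻¹+1)/4, let w ∈ ℝ^m satisfy ‖w‖₂ ≤ ε with 0 < ε ≤ σ, and set y = Ax₀ + w. If x* is a global minimizer of the ℓ¹ norm x ↦ ∑_{i=1}^n |x_i| over {x ∈ ℝⁿ : ‖y − Ax‖₂ ≤ σ}, then ‖x* − x₀‖₂² ≤ (ε+σ)² / (1 − M·(4N−1)). -/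

import Mathlib

/-!
Write `h = x* - x₀`. Both `x₀` and `x*` are feasible, so `‖A h‖₂ ≤ ε + σ`. Unit columns and
coherence `M` bound the Gram form from below: `‖A h‖₂² ≥ (1 + M) ‖h‖₂² - M ‖h‖₁²`. Minimality of
`‖x*‖₁` puts at least half of the `ℓ¹` mass of `h` on the support of `x₀`, and Cauchy–Schwarz on
that support gives `‖h‖₁² ≤ 4N ‖h‖₂²`. Combining, `(1 - M (4N - 1)) ‖h‖₂² ≤ (ε + σ)²`.
-/

open Finset

variable {ι κ : Type*} [Fintype ι] [Fintype κ]

theorem sqrt_sum_sq_sub_le (a b : ι → ℝ) :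
    √(∑ k, (a k - b k) ^ 2) ≤ √(∑ k, a k ^ 2) + √(∑ k, b k ^ 2) := by
  simpa [EuclideanSpace.norm_eq, sq_abs] using
    norm_sub_le (WithLp.toLp 2 a : EuclideanSpace ℝ ι) (WithLp.toLp 2 b)

theorem sum_mulVec_sub_sq_le (A : Matrix ι κ ℝ) (y : ι → ℝ)
    (x x' : κ → ℝ) {ε σ : ℝ} (hx : √(∑ k, (y k - A.mulVec x k) ^ 2) ≤ ε)
    (hx' : √(∑ k, (y k - A.mulVec x' k) ^ 2) ≤ σ) :
    ∑ k, A.mulVec (x' - x) k ^ 2 ≤ (ε + σ) ^ 2 := by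
  have hdiff : ∀ k, A.mulVec (x' - x) k = (y k - A.mulVec x k) - (y k - A.mulVec x' k) := by
    intro k; simp only [Matrix.mulVec_sub, Pi.sub_apply]; ring
  have hnorm : √(∑ k, A.mulVec (x' - x) k ^ 2) ≤ ε + σ := by
    simp only [hdiff]
    exact (sqrt_sum_sq_sub_le _ _).trans (add_le_add hx hx')
  calc ∑ k, A.mulVec (x' - x) k ^ 2 = √(∑ k, A.mulVec (x' - x) k ^ 2) ^ 2 :=
        (Real.sq_sqrt (by positivity)).symm
    _ ≤ (ε + σ) ^ 2 := pow_le_pow_left₀ (Real.sqrt_nonneg _) hnorm 2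

theorem sum_mulVec_sq_eq (A : Matrix κ ι ℝ) (h : ι → ℝ) :
    ∑ k, A.mulVec h k ^ 2 = ∑ i, ∑ j, h i * h j * ∑ k, A k i * A k j := by
  simp_rw [Matrix.mulVec, dotProduct, sq, sum_mul_sum, mul_sum]
  rw [sum_comm]
  refine sum_congr rfl fun i _ => ?_
  rw [sum_comm]
  exact sum_congr rfl fun j _ => sum_congr rfl fun k _ => by ring

theorem sum_sq_sub_sq_sum_abs_le_quadForm (G : Matrix ι ι ℝ) {M : ℝ} (hdiag : ∀ i, G i i = 1)
    (hoff : ∀ i j, i ≠ j → |G i j| ≤ M) (h : ι → ℝ) :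
    (1 + M) * ∑ i, h i ^ 2 - M * (∑ i, |h i|) ^ 2 ≤ ∑ i, ∑ j, h i * h j * G i j := by
  classical
  have hterm : ∀ i j, (if i = j then (1 + M) * h i ^ 2 else 0) - M * (|h i| * |h j|)
      ≤ h i * h j * G i j := by
    intro i j
    split_ifs with hij
    · subst hij
      rw [hdiag, abs_mul_abs_self]
      exact le_of_eq (by ring)
    · have hG := mul_le_mul_of_nonneg_left (hoff i j hij)
        (mul_nonneg (abs_nonneg (h i)) (abs_nonneg (h j)))
      have := neg_abs_le (h i * h j * G i j)
      rw [abs_mul, abs_mul] at this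
      linarith
  calc (1 + M) * ∑ i, h i ^ 2 - M * (∑ i, |h i|) ^ 2
      = ∑ i, ∑ j, ((if i = j then (1 + M) * h i ^ 2 else 0) - M * (|h i| * |h j|)) := by
        simp_rw [sum_sub_distrib, sum_ite_eq, mem_univ, if_true,
          sq (∑ i, |h i|), sum_mul_sum, mul_sum]
    _ ≤ _ := sum_le_sum fun i _ => sum_le_sum fun j _ => hterm i j

/-- The cone condition of `ℓ¹` minimization. -/
theorem sum_abs_le_two_mul_sum_abs_of_sum_abs_add_le {x₀ h : ι → ℝ} (S : Finset ι)
    (hS : ∀ i ∉ S, x₀ i = 0) (hle : ∑ i, |x₀ i + h i| ≤ ∑ i, |x₀ i|) :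
    ∑ i, |h i| ≤ 2 * ∑ i ∈ S, |h i| := by
  classical
  have hx₀ : ∑ i, |x₀ i| = ∑ i ∈ S, |x₀ i| :=
    (sum_subset (subset_univ S) fun i _ hi => by simp [hS i hi]).symm
  have hout : ∑ i ∈ Sᶜ, |x₀ i + h i| = ∑ i ∈ Sᶜ, |h i| :=
    sum_congr rfl fun i hi => by rw [hS i (mem_compl.mp hi), zero_add]
  have hin : ∑ i ∈ S, |x₀ i| - ∑ i ∈ S, |h i| ≤ ∑ i ∈ S, |x₀ i + h i| := by
    rw [← sum_sub_distrib]
    exact sum_le_sum fun i _ => abs_sub_abs_le_abs_add (x₀ i) (h i)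
  rw [← sum_add_sum_compl S, hout] at hle
  rw [← sum_add_sum_compl S (fun i => |h i|)]
  linarith

theorem sq_sum_abs_le_four_mul_card_mul_sum_sq {h : ι → ℝ} (S : Finset ι)
    (hcone : ∑ i, |h i| ≤ 2 * ∑ i ∈ S, |h i|) :
    (∑ i, |h i|) ^ 2 ≤ 4 * (#S : ℝ) * ∑ i, h i ^ 2 := by
  have hCS : (∑ i ∈ S, |h i|) ^ 2 ≤ (#S : ℝ) * ∑ i, h i ^ 2 :=
    calc (∑ i ∈ S, |h i|) ^ 2 ≤ #S * ∑ i ∈ S, |h i| ^ 2 :=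
        sq_sum_le_card_mul_sum_sq (s := S) (f := fun i => |h i|)
      _ ≤ #S * ∑ i, h i ^ 2 := by
        simp only [sq_abs]
        gcongr
        exact subset_univ S
  calc (∑ i, |h i|) ^ 2 ≤ (2 * ∑ i ∈ S, |h i|) ^ 2 :=
        pow_le_pow_left₀ (by positivity) hcone 2
    _ ≤ 4 * #S * ∑ i, h i ^ 2 := by nlinarith

theorem l1_stable_recovery_bound_general (m n N : ℕ)
    (A : Matrix (Fin m) (Fin n) ℝ)
    (hcols : ∀ j, ∑ k, (A k j) ^ 2 = 1)
    (M : ℝ) (hMpos : 0 < M)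
    (hM : IsGreatest {t : ℝ | ∃ i j : Fin n, i ≠ j ∧ t = |∑ k, A k i * A k j|} M)
    (x₀ : Fin n → ℝ)
    (hx₀ : (Finset.univ.filter (fun i => x₀ i ≠ 0)).card = N)
    (hNs : (N : ℝ) < (M⁻¹ + 1) / 4)
    (w : Fin m → ℝ) (ε σ : ℝ) (hεσ : ε ≤ σ)
    (hw : Real.sqrt (∑ k, (w k) ^ 2) ≤ ε)
    (y : Fin m → ℝ) (hy : y = A.mulVec x₀ + w)
    (xs : Fin n → ℝ)
    (hfeas : Real.sqrt (∑ k, (y k - A.mulVec xs k) ^ 2) ≤ σ)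
    (hmin : ∀ x : Fin n → ℝ, Real.sqrt (∑ k, (y k - A.mulVec x k) ^ 2) ≤ σ →
      (∑ i, |xs i|) ≤ ∑ i, |x i|) :
    (∑ i, (xs i - x₀ i) ^ 2) ≤ (ε + σ) ^ 2 / (1 - M * (4 * N - 1)) := by
  have hx₀feas : √(∑ k, (y k - A.mulVec x₀ k) ^ 2) ≤ ε := by simpa [hy] using hw
  have htube := sum_mulVec_sub_sq_le A y x₀ xs hx₀feas hfeas
  have hcoh := sum_sq_sub_sq_sum_abs_le_quadForm (fun i j => ∑ k, A k i * A k j)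
    (fun i => by simpa [sq] using hcols i) (fun i j hij => hM.2 ⟨i, j, hij, rfl⟩) (xs - x₀)
  rw [← sum_mulVec_sq_eq] at hcoh
  have hcone := sum_abs_le_two_mul_sum_abs_of_sum_abs_add_le (x₀ := x₀) (h := xs - x₀)
    (univ.filter fun i => x₀ i ≠ 0) (by simp) (by simpa using hmin x₀ (hx₀feas.trans hεσ))
  have hl1 := sq_sum_abs_le_four_mul_card_mul_sum_sq _ hcone
  rw [hx₀] at hl1
  have hden : 0 < 1 - M * (4 * N - 1) := by
    have := mul_lt_mul_of_pos_left (show 4 * (N : ℝ) - 1 < M⁻¹ by linarith) hMpos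
    rw [mul_inv_cancel₀ hMpos.ne'] at this
    linarith
  rw [le_div_iff₀ hden]
  simp only [Pi.sub_apply] at htube hcoh hl1
  linarith [mul_le_mul_of_nonneg_left hl1 hMpos.le]

/-- The `q = 1` case of Theorem 1 (Donoho–Elad–Temlyakov bound): if `x₀` has
exactly `N ≥ 1` nonzero entries with `N < (M⁻¹ + 1)/4`, `y = A x₀ + w` with
`‖w‖₂ ≤ ε ≤ σ`, and `x*` minimizes the ℓ¹ norm over `{x : ‖y - Ax‖₂ ≤ σ}`, then
`‖x* - x₀‖₂² ≤ (ε+σ)²/(1 - M(4N - 1))`. -/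
theorem l1_stable_recovery_bound (m n N : ℕ) (hN : 1 ≤ N)
    (A : Matrix (Fin m) (Fin n) ℝ)
    (hcols : ∀ j, ∑ k, (A k j) ^ 2 = 1)
    (M : ℝ) (hMpos : 0 < M)
    (hM : IsGreatest {t : ℝ | ∃ i j : Fin n, i ≠ j ∧ t = |∑ k, A k i * A k j|} M)
    (x₀ : Fin n → ℝ)
    (hx₀ : (Finset.univ.filter (fun i => x₀ i ≠ 0)).card = N)
    (hNs : (N : ℝ) < (M⁻¹ + 1) / 4)
    (w : Fin m → ℝ) (ε σ : ℝ) (hε : 0 < ε) (hεσ : ε ≤ σ)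
    (hw : Real.sqrt (∑ k, (w k) ^ 2) ≤ ε)
    (y : Fin m → ℝ) (hy : y = A.mulVec x₀ + w)
    (xs : Fin n → ℝ)
    (hfeas : Real.sqrt (∑ k, (y k - A.mulVec xs k) ^ 2) ≤ σ)
    (hmin : ∀ x : Fin n → ℝ, Real.sqrt (∑ k, (y k - A.mulVec x k) ^ 2) ≤ σ →
      (∑ i, |xs i|) ≤ ∑ i, |x i|) :
    (∑ i, (xs i - x₀ i) ^ 2) ≤ (ε + σ) ^ 2 / (1 - M * (4 * N - 1)) :=
  l1_stable_recovery_bound_general m n N A hcols M hMpos hM x₀ hx₀ hNs w ε σ hεσ hw y hy xs hfeas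
    hmin
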